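/- arXiv:1203.4980 — 3 statements merged into one kernel-verified Lean document; each statement's English description precedes it below -/
import Mathlib

section
/- Convolution with a nonnegative function supported (effectively) on one side preserves an asymmetry inequality: let R : ℝ → ℝ be integrable with R(y) = 0 for y ≤ β and R(y) ≥ 0 for y > β, and let φ : ℝ → ℝ be a nonnegative even integrable function that is nonincreasing on [0, ∞). Then for all Δ ≥ 0, (R * φ)(β + Δ) ≥ (R * φ)(β - Δ), where (R * φ)(x) = ∫ R(y) φ(x - y) dy. -/
/-! For `y > β` the point `β + Δ - y` is at least as close to `0` as `β - Δ - y`, so an even `φ`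
that decreases away from `0` satisfies `φ (β - Δ - y) ≤ φ (β + Δ - y)` there. Since `R` vanishes
for `y ≤ β` and is nonnegative beyond, the inequality of the integrals holds pointwise. -/

open MeasureTheory Set

section EvenAntitone

variable {φ : ℝ → ℝ}

theorem apply_abs_of_even (heven : ∀ x, φ (-x) = φ x) (x : ℝ) : φ |x| = φ x := by
  rcases abs_choice x with h | h <;> simp [h, heven]

theorem apply_le_apply_of_abs_le_of_even (heven : ∀ x, φ (-x) = φ x)
    (hmono : AntitoneOn φ (Ici 0)) {x y : ℝ} (h : |x| ≤ |y|) : φ y ≤ φ x := by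
  rw [← apply_abs_of_even heven x, ← apply_abs_of_even heven y]
  exact hmono (abs_nonneg x) (abs_nonneg y) h

theorem norm_le_apply_zero_of_even (heven : ∀ x, φ (-x) = φ x)
    (hmono : AntitoneOn φ (Ici 0)) (hpos : ∀ x, 0 ≤ φ x) (x : ℝ) : ‖φ x‖ ≤ φ 0 := by
  rw [Real.norm_of_nonneg (hpos x)]
  exact apply_le_apply_of_abs_le_of_even heven hmono (by simp)

end EvenAntitone

theorem MeasureTheory.Integrable.mul_comp_sub_left_of_bounded {R φ : ℝ → ℝ} {C : ℝ} (hR : Integrable R)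
    (hφ : AEStronglyMeasurable φ) (hφC : ∀ x, ‖φ x‖ ≤ C) (c : ℝ) :
    Integrable fun y ↦ R y * φ (c - y) :=
  hR.mul_bdd (hφ.comp_measurePreserving (Measure.measurePreserving_sub_left volume c))
    (.of_forall fun y ↦ hφC (c - y))

theorem abs_add_sub_le_abs_sub_sub {β Δ y : ℝ} (hΔ : 0 ≤ Δ) (hy : β < y) :
    |β + Δ - y| ≤ |β - Δ - y| := by
  rw [abs_of_neg (by linarith : β - Δ - y < 0), abs_le]
  constructor <;> linarith

theorem conv_remainder_ineq (R φ : ℝ → ℝ) (β : ℝ)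
    (hRi : Integrable R) (hφi : Integrable φ)
    (hR0 : ∀ y, y ≤ β → R y = 0)
    (hRpos : ∀ y, β < y → 0 ≤ R y)
    (hφpos : ∀ x, 0 ≤ φ x)
    (hφeven : ∀ x, φ (-x) = φ x)
    (hφmono : AntitoneOn φ (Set.Ici (0 : ℝ))) :
    ∀ Δ : ℝ, 0 ≤ Δ →
      (∫ y, R y * φ (β - Δ - y)) ≤ ∫ y, R y * φ (β + Δ - y) := by
  intro Δ hΔ
  have hint (c : ℝ) : Integrable fun y ↦ R y * φ (c - y) :=
    hRi.mul_comp_sub_left_of_bounded hφi.aestronglyMeasurable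
      (norm_le_apply_zero_of_even hφeven hφmono hφpos) c
  refine integral_mono (hint _) (hint _) fun y ↦ ?_
  rcases le_or_gt y β with hy | hy
  · simp [hR0 y hy]
  · exact mul_le_mul_of_nonneg_left
      (apply_le_apply_of_abs_le_of_even hφeven hφmono (abs_add_sub_le_abs_sub_sub hΔ hy))
      (hRpos y hy)
end

section
/- Strict mean contraction: if ψ ≥ 0 is integrable with ∫ ψ > 0, x·ψ(x) is integrable, ψ(β + Δ) ≤ ψ(β - Δ) for all Δ ≥ 0, and there exists a set of positive measure of Δ ≥ 0 where ψ(β + Δ) < ψ(β - Δ) with ψ(β - Δ) > 0, then ∫ x ψ(x) dx < β · ∫ ψ(x) dx. -/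
open MeasureTheory Set

theorem mean_lt_of_strict_onesided (ψ : ℝ → ℝ) (β : ℝ)
    (hpos : ∀ x, 0 ≤ ψ x) (hint : Integrable ψ)
    (hmom : Integrable (fun x => x * ψ x))
    (htot : 0 < ∫ x, ψ x)
    (hineq : ∀ Δ : ℝ, 0 ≤ Δ → ψ (β + Δ) ≤ ψ (β - Δ))
    (hstrict : 0 < volume {Δ : ℝ | 0 ≤ Δ ∧ ψ (β + Δ) < ψ (β - Δ) ∧ 0 < ψ (β - Δ)}) :
    (∫ x, x * ψ x) < β * ∫ x, ψ x := by
  -- f x = (β - x) ψ x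
  set f : ℝ → ℝ := fun x => (β - x) * ψ x with hf
  have hfint : Integrable f := by
    have : f = fun x => β * ψ x - x * ψ x := by
      funext x; simp [hf]; ring
    rw [this]
    exact (hint.const_mul β).sub hmom
  have hfval : ∫ x, f x = β * (∫ x, ψ x) - ∫ x, x * ψ x := by
    have : ∫ x, f x = ∫ x, (β * ψ x - x * ψ x) := by
      congr 1; funext x; simp [hf]; ring
    rw [this, integral_sub (hint.const_mul β) hmom, integral_const_mul]
  -- g t = f (β + t) = -t * ψ (β + t)
  set g : ℝ → ℝ := fun t => f (β + t) with hg
  have hgint : Integrable g := hfint.comp_add_left β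
  have hgval : ∫ t, g t = ∫ x, f x := integral_add_left_eq_self f β
  -- change of variables: ∫ g = ∫_{Δ>0} (g (-Δ) + g Δ)
  have hneg : Integrable (fun Δ => g (-Δ)) := hgint.comp_neg
  have hsplit : ∫ Δ in Ioi (0:ℝ), (g (-Δ) + g Δ) = ∫ t, g t := by
    rw [integral_add (hneg.integrableOn) (hgint.integrableOn),
      show (∫ Δ in Ioi (0:ℝ), g (-Δ)) = ∫ t in Iic (-(0:ℝ)), g t from
        integral_comp_neg_Ioi 0 g]
    rw [neg_zero]
    exact intervalIntegral.integral_Iic_add_Ioi hgint.integrableOn hgint.integrableOn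
  -- note g (-Δ) + g Δ = Δ * (ψ (β - Δ) - ψ (β + Δ))
  have hform : ∀ Δ : ℝ, g (-Δ) + g Δ = Δ * (ψ (β - Δ) - ψ (β + Δ)) := by
    intro Δ
    simp only [hg, hf]
    have h1 : β + -Δ = β - Δ := by ring
    rw [h1]; ring
  -- positivity
  have hpos' : 0 < ∫ Δ in Ioi (0:ℝ), (g (-Δ) + g Δ) := by
    have hnonneg : 0 ≤ᵐ[volume.restrict (Ioi (0:ℝ))] fun Δ => g (-Δ) + g Δ := by
      filter_upwards [ae_restrict_mem measurableSet_Ioi] with Δ hΔ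
      rw [hform Δ]
      exact mul_nonneg (le_of_lt hΔ) (sub_nonneg.mpr (hineq Δ (le_of_lt hΔ)))
    rw [setIntegral_pos_iff_support_of_nonneg_ae hnonneg
      ((hneg.integrableOn).add (hgint.integrableOn))]
    -- show the support ∩ Ioi 0 has positive measure
    set S := {Δ : ℝ | 0 ≤ Δ ∧ ψ (β + Δ) < ψ (β - Δ) ∧ 0 < ψ (β - Δ)} with hS
    have hsub : S \ {0} ⊆ Function.support (fun Δ => g (-Δ) + g Δ) ∩ Ioi 0 := by
      rintro Δ ⟨⟨h0, hlt, _⟩, hne⟩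
      have hΔpos : 0 < Δ := lt_of_le_of_ne h0 (fun h => hne (by simp [← h]))
      constructor
      · rw [Function.mem_support, hform Δ]
        exact ne_of_gt (mul_pos hΔpos (sub_pos.mpr hlt))
      · exact hΔpos
    have hmeas : 0 < volume (S \ {0}) := by
      have : volume S ≤ volume (S \ {0}) + volume ({0} : Set ℝ) := by
        apply (measure_mono (by intro x hx; by_cases h : x = (0:ℝ) <;>
          simp [h, hx] : S ⊆ (S \ {0}) ∪ {0})).trans (measure_union_le _ _)
      simpa [Real.volume_singleton] using lt_of_lt_of_le hstrict this
    exact lt_of_lt_of_le hmeas (measure_mono hsub)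
  have := hpos'
  rw [hsplit, hgval, hfval] at this
  linarith
end

section
/- Convolution of two even unimodal densities preserves the one-sided inequality about β: if ψ : ℝ → ℝ is nonnegative integrable with ψ(β + Δ) ≤ ψ(β - Δ) for all Δ ≥ 0, and φ : ℝ → ℝ is nonnegative, even, integrable, and nonincreasing on [0, ∞), then (ψ * φ)(β + Δ) ≤ (ψ * φ)(β - Δ) for all Δ ≥ 0. -/
/-!
After centring at `β`, the two integrals are `∫ g t * φ (Δ - t)` and `∫ g t * φ (Δ + t)` with
`g t = ψ (β + t)`. Averaging each with its reflection `t ↦ -t` compares them pointwise, and there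
the binary rearrangement inequality applies: for `t ≥ 0` both `g (-t) - g t` and
`φ (Δ - t) - φ (Δ + t)` are nonnegative, and for `t ≤ 0` both are nonpositive.
-/

open MeasureTheory

namespace Function.Even

variable {α β : Type*} [AddGroup α] [LinearOrder α] {f : α → β}

lemma apply_abs (hf : f.Even) (x : α) : f |x| = f x := by
  rcases abs_choice x with h | h <;> simp only [h, hf.eq]

lemma apply_le_apply_of_abs_le [AddLeftMono α] [AddRightMono α] [Preorder β] (hf : f.Even)
    (hmono : AntitoneOn f (Set.Ici 0)) {x y : α} (h : |y| ≤ |x|) : f x ≤ f y := by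
  rw [← hf.apply_abs x, ← hf.apply_abs y]
  exact hmono (abs_nonneg y) (abs_nonneg x) h

end Function.Even

section Rearrangement

variable {g φ : ℝ → ℝ}

lemma mul_add_mul_le_mul_add_mul_of_even (hg : ∀ t, 0 ≤ t → g t ≤ g (-t))
    (hφeven : φ.Even) (hφmono : AntitoneOn φ (Set.Ici 0)) {Δ : ℝ} (hΔ : 0 ≤ Δ) (t : ℝ) :
    g t * φ (Δ - t) + g (-t) * φ (Δ + t) ≤ g t * φ (Δ + t) + g (-t) * φ (Δ - t) := by
  rcases le_total 0 t with ht | ht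
  · have hφt : φ (Δ + t) ≤ φ (Δ - t) :=
      hφeven.apply_le_apply_of_abs_le hφmono <| by
        rw [abs_of_nonneg (by linarith : 0 ≤ Δ + t)]
        exact abs_le.2 ⟨by linarith, by linarith⟩
    exact mul_add_mul_le_mul_add_mul (hg t ht) hφt
  · have hgt : g (-t) ≤ g t := by simpa using hg (-t) (neg_nonneg.2 ht)
    have hφt : φ (Δ - t) ≤ φ (Δ + t) :=
      hφeven.apply_le_apply_of_abs_le hφmono <| by
        rw [abs_of_nonneg (by linarith : 0 ≤ Δ - t)]
        exact abs_le.2 ⟨by linarith, by linarith⟩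
    exact mul_add_mul_le_mul_add_mul' hgt hφt

lemma integral_mul_apply_sub_le_integral_mul_apply_add (hgi : Integrable g)
    (hg : ∀ t, 0 ≤ t → g t ≤ g (-t)) (hφm : AEStronglyMeasurable φ) {C : ℝ}
    (hφC : ∀ x, ‖φ x‖ ≤ C) (hφeven : φ.Even) (hφmono : AntitoneOn φ (Set.Ici 0)) {Δ : ℝ}
    (hΔ : 0 ≤ Δ) : ∫ t, g t * φ (Δ - t) ≤ ∫ t, g t * φ (Δ + t) := by
  have hintegrable : ∀ {g' : ℝ → ℝ}, Integrable g' → ∀ s : ℝ → ℝ, MeasurePreserving s →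
      Integrable fun t => g' t * φ (s t) := fun hg' s hs =>
    hg'.mul_bdd (hφm.comp_measurePreserving hs) (ae_of_all _ fun t => hφC (s t))
  have hsub := Measure.measurePreserving_sub_left volume Δ
  have hadd := measurePreserving_add_left volume Δ
  have h₁ : Integrable fun t => g t * φ (Δ - t) := hintegrable hgi _ hsub
  have h₂ : Integrable fun t => g (-t) * φ (Δ + t) := hintegrable hgi.comp_neg _ hadd
  have h₃ : Integrable fun t => g t * φ (Δ + t) := hintegrable hgi _ hadd
  have h₄ : Integrable fun t => g (-t) * φ (Δ - t) := hintegrable hgi.comp_neg _ hsub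
  have hreflect : ∀ f : ℝ → ℝ, ∫ t, f t = ((∫ t, f t) + ∫ t, f (-t)) / 2 := fun f => by
    rw [integral_neg_eq_self f]; ring
  rw [hreflect fun t => g t * φ (Δ - t), hreflect fun t => g t * φ (Δ + t)]
  simp only [sub_neg_eq_add, ← sub_eq_add_neg]
  rw [← integral_add h₁ h₂, ← integral_add h₃ h₄]
  gcongr ?_ / 2
  exact integral_mono (h₁.add h₂) (h₃.add h₄)
    (mul_add_mul_le_mul_add_mul_of_even hg hφeven hφmono hΔ)

end Rearrangement

theorem conv_preserves_onesided_general (ψ φ : ℝ → ℝ) (β : ℝ)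
    (hψi : Integrable ψ)
    (hφpos : ∀ x, 0 ≤ φ x) (hφi : Integrable φ)
    (hφeven : ∀ x, φ (-x) = φ x)
    (hφmono : AntitoneOn φ (Set.Ici (0 : ℝ)))
    (hψ : ∀ Δ : ℝ, 0 ≤ Δ → ψ (β + Δ) ≤ ψ (β - Δ)) :
    ∀ Δ : ℝ, 0 ≤ Δ →
      (∫ y, ψ y * φ (β + Δ - y)) ≤ ∫ y, ψ y * φ (β - Δ - y) := by
  intro Δ hΔ
  have hφbdd : ∀ x, ‖φ x‖ ≤ φ 0 := fun x => by
    rw [Real.norm_of_nonneg (hφpos x)]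
    exact Function.Even.apply_le_apply_of_abs_le hφeven hφmono (by simp)
  have hψβ : ∀ t, 0 ≤ t → ψ (β + t) ≤ ψ (β + -t) := fun t ht => by
    simpa only [← sub_eq_add_neg] using hψ t ht
  calc ∫ y, ψ y * φ (β + Δ - y)
      = ∫ t, ψ (β + t) * φ (Δ - t) := by
        rw [← integral_add_left_eq_self (fun y => ψ y * φ (β + Δ - y)) β]
        simp only [add_sub_add_left_eq_sub]
    _ ≤ ∫ t, ψ (β + t) * φ (Δ + t) :=
        integral_mul_apply_sub_le_integral_mul_apply_add (hψi.comp_add_left β) hψβ hφi.1 hφbdd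
          hφeven hφmono hΔ
    _ = ∫ y, ψ y * φ (β - Δ - y) := by
        rw [← integral_add_left_eq_self (fun y => ψ y * φ (β - Δ - y)) β]
        congr 1 with t
        rw [← hφeven, show -(Δ + t) = β - Δ - (β + t) by ring]

theorem conv_preserves_onesided (ψ φ : ℝ → ℝ) (β : ℝ)
    (hψpos : ∀ x, 0 ≤ ψ x) (hψi : Integrable ψ)
    (hφpos : ∀ x, 0 ≤ φ x) (hφi : Integrable φ)
    (hφeven : ∀ x, φ (-x) = φ x)
    (hφmono : AntitoneOn φ (Set.Ici (0 : ℝ)))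
    (hψ : ∀ Δ : ℝ, 0 ≤ Δ → ψ (β + Δ) ≤ ψ (β - Δ)) :
    ∀ Δ : ℝ, 0 ≤ Δ →
      (∫ y, ψ y * φ (β + Δ - y)) ≤ ∫ y, ψ y * φ (β - Δ - y) :=
  conv_preserves_onesided_general ψ φ β hψi hφpos hφi hφeven hφmono hψ
end
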